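/- Let R be a commutative Noetherian ring of prime characteristic p > 0, let I be an ideal of R, let s ≥ 1 be a real number, and let x ∈ R. Then x belongs to the weak s-closure of I if and only if for every minimal prime 𝔭 of R, the image of x in R/𝔭 belongs to the weak s-closure of the ideal I(R/𝔭). -/

import Mathlib

open Pointwise

/-- `R°`: the set of elements of `R` not contained in any minimal prime of `R`. -/
def RCirc (R : Type*) [CommRing R] : Set R :=
  {c | ∀ P ∈ minimalPrimes R, c ∉ P}

/-- The `q`-th Frobenius power `I^[q]` of an ideal `I`, generated by `q`-th powers
of elements of `I`. -/
def frobPow {R : Type*} [CommRing R] (I : Ideal R) (q : ℕ) : Ideal R :=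
  Ideal.span ((fun f => f ^ q) '' (I : Set R))

/-- The `(s,q)` mixed power `I^(s,q) = I^⌈sq⌉ + I^[q]`. -/
noncomputable def mixedPow {R : Type*} [CommRing R] (I : Ideal R) (s : ℝ) (q : ℕ) : Ideal R :=
  I ^ ⌈s * (q : ℝ)⌉₊ + frobPow I q

/-- The weak `s`-closure of `I`: elements `x` such that there is `c ∈ R°` with
`c·x^q ∈ I^(s,q)` for all sufficiently large powers `q = p^e` of `p`. -/
def weakCl {R : Type*} [CommRing R] (p : ℕ) (I : Ideal R) (s : ℝ) : Set R :=
  {x | ∃ c ∈ RCirc R, ∃ N : ℕ, ∀ e : ℕ, N ≤ e → c * x ^ p ^ e ∈ mixedPow I s (p ^ e)}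

/-- The tight closure `I*` of `I`. -/
def tightCl {R : Type*} [CommRing R] (p : ℕ) (I : Ideal R) : Set R :=
  {x | ∃ c ∈ RCirc R, ∃ N : ℕ, ∀ e : ℕ, N ≤ e → c * x ^ p ^ e ∈ frobPow I (p ^ e)}

/-- The integral closure of `I`: elements `x` such that there is `c ∈ R°` with
`c·x^n ∈ I^n` for all sufficiently large `n`. -/
def intCl {R : Type*} [CommRing R] (I : Ideal R) : Set R :=
  {x | ∃ c ∈ RCirc R, ∃ N : ℕ, ∀ n : ℕ, N ≤ n → c * x ^ n ∈ I ^ n}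

/-- The `α`-th rational power `I_α` of `I`, for rational `α = a/b ≥ 0`:
elements `x` with `x^b` in the integral closure of `I^a`. -/
noncomputable def ratPow {R : Type*} [CommRing R] (I : Ideal R) (α : ℚ) : Set R :=
  {x | x ^ α.den ∈ intCl (I ^ α.num.toNat)}

/-- `μ(I)`: the minimal number of generators of `I`. -/
noncomputable def mu {R : Type*} [CommRing R] (I : Ideal R) : ℕ :=
  sInf {m : ℕ | ∃ s : Finset R, s.card = m ∧ Ideal.span (s : Set R) = I}

/-- An ideal has positive height if it is not contained in any minimal prime. -/
def PosHeight {R : Type*} [CommRing R] (I : Ideal R) : Prop :=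
  ∀ P ∈ minimalPrimes R, ¬ I ≤ P

/-!
Reducing modulo a minimal prime preserves the defining condition, which gives one direction.
Conversely, for each minimal prime `𝔭` take a witness `c_𝔭 ∉ 𝔭` modulo `𝔭` and an element `d_𝔭`
lying in every other minimal prime but not in `𝔭`; then `d_𝔭 c_𝔭 x^q ∈ I^(s,q) + nil(R)` for large
`q`, so the ideal of all such multipliers has positive height and, by prime avoidance, meets `R°`
in some `c`. In a Noetherian ring the `p^k`-th Frobenius power kills `nil(R)` for large `k`, and it
maps `I^(s,q)` into `I^(s,qp^k)`; hence `c^(p^k)` witnesses `x` in the weak `s`-closure.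
-/

open Filter

section MinimalPrimes

variable {R : Type*} [CommRing R]

theorem exists_notMem_of_mem_minimalPrimes (hfin : (minimalPrimes R).Finite) {P : Ideal R}
    (hP : P ∈ minimalPrimes R) : ∃ d ∉ P, ∀ Q ∈ minimalPrimes R, Q ≠ P → d ∈ Q := by
  have hnle : ¬ (hfin.toFinset.erase P).inf id ≤ P := by
    rw [hP.1.1.inf_le']
    rintro ⟨Q, hQ, hQP⟩
    rw [Finset.mem_erase, Set.Finite.mem_toFinset] at hQ
    exact hQ.1 (le_antisymm hQP (hP.2 hQ.2.1 hQP))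
  obtain ⟨d, hd, hdP⟩ := SetLike.not_le_iff_exists.1 hnle
  exact ⟨d, hdP, fun Q hQ hQP =>
    Finset.inf_le (f := id) (Finset.mem_erase.2 ⟨hQP, hfin.mem_toFinset.2 hQ⟩) hd⟩

theorem mul_mem_nilradical_of_forall_mem_minimalPrimes_of_ne {P : Ideal R} {d t : R}
    (hd : ∀ Q ∈ minimalPrimes R, Q ≠ P → d ∈ Q) (ht : t ∈ P) : d * t ∈ nilradical R := by
  rw [nilradical, ← Ideal.sInf_minimalPrimes]
  refine Submodule.mem_sInf.2 fun Q hQ => ?_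
  obtain rfl | hQP := eq_or_ne Q P
  · exact Ideal.mul_mem_left _ d ht
  · exact Ideal.mul_mem_right t _ (hd Q hQ hQP)

theorem pow_mem_RCirc {c : R} (hc : c ∈ RCirc R) (n : ℕ) : c ^ n ∈ RCirc R :=
  fun P hP hcP => hc P hP (hP.1.1.mem_of_pow_mem n hcP)

theorem mem_RCirc_iff_ne_zero [IsDomain R] {c : R} : c ∈ RCirc R ↔ c ≠ 0 := by
  simp [RCirc, IsDomain.minimalPrimes_eq_singleton_bot]

theorem exists_mem_RCirc_of_posHeight (hfin : (minimalPrimes R).Finite) {J : Ideal R}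
    (hJ : PosHeight J) : ∃ c ∈ J, c ∈ RCirc R := by
  by_contra! h
  have hsub : (J : Set R) ⊆ ⋃ P ∈ minimalPrimes R, (id P : Set R) := fun c hc => by
    simpa [RCirc] using h c hc
  obtain ⟨P, hP, hJP⟩ :=
    (Ideal.subset_union_prime_finite hfin ⊥ ⊥ fun P hP _ _ => hP.1.1).1 hsub
  exact hJ P hP hJP

def eventualColon {ι : Type*} (l : Filter ι) (K : ι → Ideal R) (y : ι → R) : Ideal R where
  carrier := {c | ∀ᶠ i in l, c * y i ∈ K i}
  add_mem' ha hb := (ha.and hb).mono fun i h => by rw [add_mul]; exact add_mem h.1 h.2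
  zero_mem' := .of_forall fun i => by simp
  smul_mem' r c hc := hc.mono fun i h => by
    rw [smul_eq_mul, mul_assoc]; exact (K i).mul_mem_left r h

theorem exists_mem_RCirc_eventually_mem_sup_nilradical (hfin : (minimalPrimes R).Finite)
    {ι : Type*} {l : Filter ι} {K : ι → Ideal R} {y : ι → R}
    (h : ∀ P ∈ minimalPrimes R, ∃ c ∉ P, ∀ᶠ i in l, c * y i ∈ K i ⊔ P) :
    ∃ c ∈ RCirc R, ∀ᶠ i in l, c * y i ∈ K i ⊔ nilradical R := by
  suffices PosHeight (eventualColon l (fun i => K i ⊔ nilradical R) y) from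
    (exists_mem_RCirc_of_posHeight hfin this).imp fun c hc => ⟨hc.2, hc.1⟩
  intro P hP hle
  obtain ⟨c, hcP, hc⟩ := h P hP
  obtain ⟨d, hdP, hd⟩ := exists_notMem_of_mem_minimalPrimes hfin hP
  refine hP.1.1.mul_notMem hdP hcP (hle (hc.mono fun i hi => ?_))
  obtain ⟨m, hm, t, ht, hmt⟩ := Submodule.mem_sup.1 hi
  change d * c * y i ∈ K i ⊔ nilradical R
  rw [mul_assoc, ← hmt, mul_add]
  exact add_mem (Ideal.mem_sup_left ((K i).mul_mem_left d hm))
    (Ideal.mem_sup_right (mul_mem_nilradical_of_forall_mem_minimalPrimes_of_ne hd ht))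

end MinimalPrimes

section FrobeniusPowers

variable {R S : Type*} [CommRing R] [CommRing S]

theorem pow_mem_frobPow {I : Ideal R} {g : R} (hg : g ∈ I) (q : ℕ) : g ^ q ∈ frobPow I q :=
  Ideal.subset_span ⟨g, hg, rfl⟩

theorem map_frobPow_of_surjective {f : R →+* S} (hf : Function.Surjective f) (I : Ideal R)
    (q : ℕ) : (frobPow I q).map f = frobPow (I.map f) q := by
  have himage : ((I.map f : Ideal S) : Set S) = f '' I :=
    Set.ext fun y => Ideal.mem_map_iff_of_surjective f hf
  rw [frobPow, frobPow, Ideal.map_span, himage, Set.image_image, Set.image_image]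
  simp_rw [map_pow]

theorem map_mixedPow_of_surjective {f : R →+* S} (hf : Function.Surjective f) (I : Ideal R)
    (s : ℝ) (q : ℕ) : (mixedPow I s q).map f = mixedPow (I.map f) s q := by
  rw [mixedPow, mixedPow, Ideal.add_eq_sup, Ideal.add_eq_sup, Ideal.map_sup, Ideal.map_pow,
    map_frobPow_of_surjective hf]

variable {p : ℕ} [ExpChar R p]

theorem map_iterateFrobenius_le_pow (I : Ideal R) (k : ℕ) :
    I.map (iterateFrobenius R p k) ≤ I ^ p ^ k :=
  Ideal.map_le_iff_le_comap.2 fun _ hg => Ideal.pow_mem_pow hg _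

theorem map_iterateFrobenius_frobPow_le (I : Ideal R) (q k : ℕ) :
    (frobPow I q).map (iterateFrobenius R p k) ≤ frobPow I (q * p ^ k) := by
  rw [frobPow, Ideal.map_span, Ideal.span_le]
  rintro _ ⟨_, ⟨g, hg, rfl⟩, rfl⟩
  rw [iterateFrobenius_def, ← pow_mul]
  exact pow_mem_frobPow hg _

theorem map_iterateFrobenius_mixedPow_le (I : Ideal R) (s : ℝ) (q k : ℕ) :
    (mixedPow I s q).map (iterateFrobenius R p k) ≤ mixedPow I s (q * p ^ k) := by
  rw [mixedPow, mixedPow, Ideal.add_eq_sup, Ideal.add_eq_sup, Ideal.map_sup, Ideal.map_pow]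
  refine sup_le_sup ?_ (map_iterateFrobenius_frobPow_le I q k)
  have hceil : ⌈s * ↑(q * p ^ k)⌉₊ ≤ ⌈s * q⌉₊ * p ^ k := by
    rw [Nat.ceil_le]
    push_cast
    rw [← mul_assoc]
    gcongr
    exact Nat.le_ceil _
  calc (I.map (iterateFrobenius R p k)) ^ ⌈s * q⌉₊
      ≤ (I ^ p ^ k) ^ ⌈s * q⌉₊ := Ideal.pow_right_mono (map_iterateFrobenius_le_pow I k) _
    _ = I ^ (⌈s * q⌉₊ * p ^ k) := by rw [← pow_mul, mul_comm]
    _ ≤ I ^ ⌈s * ↑(q * p ^ k)⌉₊ := Ideal.pow_le_pow_right hceil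

theorem exists_map_iterateFrobenius_nilradical_eq_bot [IsNoetherianRing R] (hp : 1 < p) :
    ∃ k, (nilradical R).map (iterateFrobenius R p k) = ⊥ := by
  obtain ⟨k, hk⟩ := IsNoetherianRing.isNilpotent_nilradical R
  refine ⟨k, eq_bot_iff.2 ?_⟩
  calc (nilradical R).map (iterateFrobenius R p k) ≤ nilradical R ^ p ^ k :=
        map_iterateFrobenius_le_pow _ k
    _ ≤ nilradical R ^ k := Ideal.pow_le_pow_right (Nat.lt_pow_self hp).le
    _ = ⊥ := hk

end FrobeniusPowers

section WeakClosure

variable {R : Type*} [CommRing R] {p : ℕ} {I : Ideal R} {s : ℝ} {x : R}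

theorem mem_weakCl_iff :
    x ∈ weakCl p I s ↔ ∃ c ∈ RCirc R, ∀ᶠ e in atTop, c * x ^ p ^ e ∈ mixedPow I s (p ^ e) := by
  simp only [weakCl, Set.mem_ofPred_eq, eventually_atTop]

theorem mk_mem_weakCl_map_iff (P : Ideal R) [P.IsPrime] :
    Ideal.Quotient.mk P x ∈ weakCl p (I.map (Ideal.Quotient.mk P)) s ↔
      ∃ c ∉ P, ∀ᶠ e in atTop, c * x ^ p ^ e ∈ mixedPow I s (p ^ e) ⊔ P := by
  have hmem (y : R) (q : ℕ) :
      Ideal.Quotient.mk P y ∈ (mixedPow I s q).map (Ideal.Quotient.mk P) ↔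
        y ∈ mixedPow I s q ⊔ P := by
    rw [← Ideal.mem_comap, Ideal.comap_map_of_surjective' _ Ideal.Quotient.mk_surjective,
      Ideal.mk_ker]
  simp only [mem_weakCl_iff, Ideal.Quotient.mk_surjective.exists, mem_RCirc_iff_ne_zero, ne_eq,
    Ideal.Quotient.eq_zero_iff_mem, ← map_mixedPow_of_surjective Ideal.Quotient.mk_surjective,
    ← map_pow, ← map_mul, hmem]

theorem mem_weakCl_of_eventually_mem_sup_nilradical [IsNoetherianRing R] [ExpChar R p]
    (hp : 1 < p) {c : R} (hc : c ∈ RCirc R)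
    (h : ∀ᶠ e in atTop, c * x ^ p ^ e ∈ mixedPow I s (p ^ e) ⊔ nilradical R) :
    x ∈ weakCl p I s := by
  obtain ⟨k, hk⟩ := exists_map_iterateFrobenius_nilradical_eq_bot (R := R) hp
  refine mem_weakCl_iff.2 ⟨c ^ p ^ k, pow_mem_RCirc hc _, ?_⟩
  rw [← map_add_atTop_eq_nat k, eventually_map]
  refine h.mono fun e he => ?_
  have hmap : (mixedPow I s (p ^ e) ⊔ nilradical R).map (iterateFrobenius R p k) ≤
      mixedPow I s (p ^ (e + k)) := by
    rw [Ideal.map_sup, hk, sup_bot_eq, pow_add]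
    exact map_iterateFrobenius_mixedPow_le I s _ k
  have := hmap (Ideal.mem_map_of_mem _ he)
  rwa [iterateFrobenius_def, mul_pow, ← pow_mul, ← pow_add] at this

end WeakClosure

theorem stmt14_general {R : Type*} [CommRing R] [IsNoetherianRing R]
    (p : ℕ) (hp : p.Prime) (hcp : CharP R p)
    (I : Ideal R) (s : ℝ) (x : R) :
    x ∈ weakCl p I s ↔ ∀ P ∈ minimalPrimes R,
      Ideal.Quotient.mk P x ∈ weakCl p (I.map (Ideal.Quotient.mk P)) s := by
  have : ExpChar R p := ExpChar.prime hp
  constructor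
  · rintro hx P hP
    have := hP.1.1
    obtain ⟨c, hc, h⟩ := mem_weakCl_iff.1 hx
    exact (mk_mem_weakCl_map_iff P).2 ⟨c, hc P hP, h.mono fun e he => Ideal.mem_sup_left he⟩
  · intro H
    obtain ⟨c, hc, h⟩ := exists_mem_RCirc_eventually_mem_sup_nilradical
      (minimalPrimes.finite_of_isNoetherianRing R) fun P hP => by
        have := hP.1.1
        exact (mk_mem_weakCl_map_iff P).1 (H P hP)
    exact mem_weakCl_of_eventually_mem_sup_nilradical hp.one_lt hc h

/-- `x` belongs to the weak `s`-closure of `I` iff for every minimal prime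
`𝔭` of `R`, the image of `x` in `R/𝔭` belongs to the weak `s`-closure of `I(R/𝔭)`. -/
theorem stmt14 {R : Type*} [CommRing R] [IsNoetherianRing R]
    (p : ℕ) (hp : p.Prime) (hcp : CharP R p)
    (I : Ideal R) (s : ℝ) (hs : 1 ≤ s) (x : R) :
    x ∈ weakCl p I s ↔ ∀ P ∈ minimalPrimes R,
      Ideal.Quotient.mk P x ∈ weakCl p (I.map (Ideal.Quotient.mk P)) s :=
  stmt14_general p hp hcp I s x
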